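/- Let $E_1,\dots,E_n,F$ be Banach spaces (over the real or complex field), $1<p<\infty$, $1/p+1/p^*=1$, and $T:E_1\times\cdots\times E_n\to F$ a bounded $n$-linear operator. The following are equivalent: (i) for all sequences $(x_i^{(j)})_{i=1}^\infty$ in $E_j$ with $\sum_{i=1}^\infty\|x_i^{(j)}\|^{np}<\infty$ for $j=1,\dots,n$, the sequence $(T(x_i^{(1)},\dots,x_i^{(n)}))_{i=1}^\infty$ is Cohen strongly $p$-summing in $F$; (ii) there exists $C>0$ such that $\sum_{i=1}^m|\varphi_i(T(x_i^{(1)},\dots,x_i^{(n)}))|\le C\,\prod_{j=1}^n(\sum_{i=1}^m\|x_i^{(j)}\|^{np})^{1/(np)}\,\|(\varphi_i)_{i=1}^m\|_{w,p^*}$ for all $m\in\mathbb{N}$, all $x_i^{(j)}\in E_j$ and all $\varphi_i\in F'$. -/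

import Mathlib

/-!
(ii) ⇒ (i): the inequality, applied to finite sections, bounds the partial sums of the series.

(i) ⇒ (ii): if no constant works, choose for every `k` a finite block violating the inequality
with constant `4 ^ k`. Since `n / (n p) + 1 / q = 1`, it can be rescaled so that its `np`-sums and
its weak `q`-sums are at most `2 ^ (-k)` while its Cohen sum still exceeds `2 ^ k`. Concatenating
these blocks gives sequences that satisfy the hypotheses of (i) but whose Cohen series has
unbounded partial sums.
-/

open scoped BigOperators

/-- The weak `q`-norm of a finite family of continuous linear functionals on `F`. -/
noncomputable def weakNorm {𝕜 F : Type*} [RCLike 𝕜] [NormedAddCommGroup F] [NormedSpace 𝕜 F]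
    {ι : Type*} [Fintype ι] (q : ℝ) (φ : ι → F →L[𝕜] 𝕜) : ℝ :=
  ⨆ y : Metric.closedBall (0 : F) 1, (∑ i, ‖φ i (y : F)‖ ^ q) ^ (1 / q)

open Metric

lemma sum_norm_smul_rpow {𝕜 V κ : Type*} [NormedField 𝕜] [SeminormedAddCommGroup V]
    [NormedSpace 𝕜 V] [Fintype κ] (c : 𝕜) (v : κ → V) (r : ℝ) :
    ∑ i, ‖c • v i‖ ^ r = ‖c‖ ^ r * ∑ i, ‖v i‖ ^ r := by
  simp only [norm_smul, Real.mul_rpow (norm_nonneg c) (norm_nonneg _), Finset.mul_sum]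

section WeakNorm

variable {𝕜 F κ : Type*} [RCLike 𝕜] [NormedAddCommGroup F] [NormedSpace 𝕜 F] [Fintype κ]
  {q : ℝ}

lemma bddAbove_weakNorm_range (hq : 0 ≤ q) (φ : κ → F →L[𝕜] 𝕜) :
    BddAbove (Set.range fun y : closedBall (0 : F) 1 => (∑ i, ‖φ i y‖ ^ q) ^ (1 / q)) := by
  refine ⟨(∑ i, ‖φ i‖ ^ q) ^ (1 / q), ?_⟩
  rintro _ ⟨⟨y, hy⟩, rfl⟩
  rw [mem_closedBall_zero_iff] at hy
  dsimp only
  gcongr with i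
  calc ‖φ i y‖ ≤ ‖φ i‖ * ‖y‖ := (φ i).le_opNorm y
    _ ≤ ‖φ i‖ := mul_le_of_le_one_right (norm_nonneg _) hy

lemma rpow_sum_le_weakNorm (hq : 0 ≤ q) (φ : κ → F →L[𝕜] 𝕜) {y : F}
    (hy : y ∈ closedBall (0 : F) 1) : (∑ i, ‖φ i y‖ ^ q) ^ (1 / q) ≤ weakNorm q φ :=
  le_ciSup (bddAbove_weakNorm_range hq φ) ⟨y, hy⟩

lemma sum_rpow_le_weakNorm_rpow (hq : 0 < q) (φ : κ → F →L[𝕜] 𝕜) {y : F}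
    (hy : y ∈ closedBall (0 : F) 1) : ∑ i, ‖φ i y‖ ^ q ≤ weakNorm q φ ^ q := by
  have hsum : 0 ≤ ∑ i, ‖φ i y‖ ^ q := by positivity
  calc ∑ i, ‖φ i y‖ ^ q = ((∑ i, ‖φ i y‖ ^ q) ^ (1 / q)) ^ q := by
        rw [one_div, Real.rpow_inv_rpow hsum hq.ne']
    _ ≤ weakNorm q φ ^ q := by gcongr; exact rpow_sum_le_weakNorm hq.le φ hy

lemma weakNorm_nonneg (hq : 0 ≤ q) (φ : κ → F →L[𝕜] 𝕜) : 0 ≤ weakNorm q φ :=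
  (by positivity : (0 : ℝ) ≤ (∑ i, ‖φ i 0‖ ^ q) ^ (1 / q)).trans
    (rpow_sum_le_weakNorm hq φ (mem_closedBall_self zero_le_one))

lemma weakNorm_le_rpow (hq : 0 ≤ q) (φ : κ → F →L[𝕜] 𝕜) {M : ℝ}
    (h : ∀ y ∈ closedBall (0 : F) 1, ∑ i, ‖φ i y‖ ^ q ≤ M) : weakNorm q φ ≤ M ^ (1 / q) := by
  have : Nonempty (closedBall (0 : F) 1) := ⟨⟨0, mem_closedBall_self zero_le_one⟩⟩
  exact ciSup_le fun y => by gcongr; exact h y y.2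

lemma norm_le_weakNorm (hq : 0 < q) (φ : κ → F →L[𝕜] 𝕜) (i : κ) : ‖φ i‖ ≤ weakNorm q φ := by
  refine ContinuousLinearMap.opNorm_le_of_unit_norm (weakNorm_nonneg hq.le φ) fun y hy => ?_
  calc ‖φ i y‖ = (‖φ i y‖ ^ q) ^ (1 / q) := by
        rw [one_div, Real.rpow_rpow_inv (norm_nonneg _) hq.ne']
    _ ≤ (∑ i, ‖φ i y‖ ^ q) ^ (1 / q) := by
        gcongr
        exact Finset.single_le_sum (f := fun i => ‖φ i y‖ ^ q) (fun _ _ => by positivity)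
          (Finset.mem_univ i)
    _ ≤ weakNorm q φ := rpow_sum_le_weakNorm hq.le φ (by simp [hy])

lemma weakNorm_smul (hq : q ≠ 0) (c : 𝕜) (φ : κ → F →L[𝕜] 𝕜) :
    weakNorm q (fun i => c • φ i) = ‖c‖ * weakNorm q φ := by
  unfold weakNorm
  rw [Real.mul_iSup_of_nonneg (norm_nonneg c)]
  congr 1 with y
  simp only [smul_apply, norm_smul]
  rw [Finset.sum_congr rfl fun i _ => Real.mul_rpow (norm_nonneg c) (norm_nonneg _),
    ← Finset.mul_sum, Real.mul_rpow (by positivity) (by positivity), one_div,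
    Real.rpow_rpow_inv (norm_nonneg c) hq]

lemma weakNorm_comp_equiv {κ' : Type*} [Fintype κ'] (e : κ' ≃ κ) (φ : κ → F →L[𝕜] 𝕜) :
    weakNorm q (φ ∘ e) = weakNorm q φ := by
  unfold weakNorm
  congr 1 with y
  exact congrArg (· ^ (1 / q)) (e.sum_comp fun i => ‖φ i y‖ ^ q)

end WeakNorm

lemma summable_sigma_of_sum_le {α : Type*} {κ : α → Type*} [∀ k, Fintype (κ k)]
    {f : (Σ k, κ k) → ℝ} (hf : 0 ≤ f) {w : α → ℝ} (hw : Summable w)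
    (h : ∀ k, ∑ i, f ⟨k, i⟩ ≤ w k) : Summable f :=
  (summable_sigma_of_nonneg hf).2 ⟨fun _ => .of_finite,
    hw.of_nonneg_of_le (fun _ => tsum_nonneg fun _ => hf _) fun k =>
      (tsum_fintype _).trans_le (h k)⟩

lemma tsum_sigma_le_of_sum_le {α : Type*} {κ : α → Type*} [∀ k, Fintype (κ k)]
    {f : (Σ k, κ k) → ℝ} (hf : 0 ≤ f) {w : α → ℝ} (hw : Summable w)
    (h : ∀ k, ∑ i, f ⟨k, i⟩ ≤ w k) : ∑' σ, f σ ≤ ∑' k, w k := by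
  rw [(summable_sigma_of_sum_le hf hw h).tsum_sigma' fun _ => .of_finite]
  exact Summable.tsum_le_tsum (fun k => (tsum_fintype _).trans_le (h k))
    (summable_sigma_of_nonneg hf |>.1 (summable_sigma_of_sum_le hf hw h)).2 hw

section Summing

variable {𝕜 : Type*} [RCLike 𝕜] {ι : Type*} {E : ι → Type*}
  [∀ j, NormedAddCommGroup (E j)] [∀ j, NormedSpace 𝕜 (E j)]
  {F : Type*} [NormedAddCommGroup F] [NormedSpace 𝕜 F]

def WeaklySummable {κ : Type*} (q : ℝ) (φ : κ → F →L[𝕜] 𝕜) : Prop :=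
  ∃ C : ℝ, ∀ y ∈ closedBall (0 : F) 1, ∀ s : Finset κ, ∑ i ∈ s, ‖φ i y‖ ^ q ≤ C

/-- For `r = n p` and `q = p*`, this says that `T` maps `n`-tuples of `np`-summable sequences
indexed by `κ` to Cohen strongly `p`-summing sequences. -/
def CohenSumming (κ : Type*) (T : ContinuousMultilinearMap 𝕜 E F) (r q : ℝ) : Prop :=
  ∀ x : ∀ j, κ → E j, (∀ j, Summable fun i => ‖x j i‖ ^ r) →
    ∀ φ : κ → F →L[𝕜] 𝕜, WeaklySummable q φ → Summable fun i => ‖φ i (T fun j => x j i)‖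

def CohenInequality [Fintype ι] (T : ContinuousMultilinearMap 𝕜 E F) (r q C : ℝ) : Prop :=
  ∀ (m : ℕ) (x : ∀ j, Fin m → E j) (φ : Fin m → F →L[𝕜] 𝕜),
    ∑ i, ‖φ i (T fun j => x j i)‖ ≤ C * (∏ j, (∑ i, ‖x j i‖ ^ r) ^ (1 / r)) * weakNorm q φ

variable {T : ContinuousMultilinearMap 𝕜 E F} {r q : ℝ}

lemma CohenSumming.of_injective {κ κ' : Type*} (H : CohenSumming κ T r q) (hr : r ≠ 0)
    (hq : q ≠ 0) {e : κ' → κ} (he : Function.Injective e) : CohenSumming κ' T r q := by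
  rintro x hx φ ⟨C, hφ⟩
  set X : ∀ j, κ → E j := fun j => Function.extend e (x j) 0
  set Φ : κ → F →L[𝕜] 𝕜 := Function.extend e φ 0
  have hXe : ∀ j i, X j (e i) = x j i := fun j => he.extend_apply (x j) 0
  have hΦe : ∀ i, Φ (e i) = φ i := he.extend_apply φ 0
  have hX0 : ∀ j, ∀ k ∉ Set.range e, X j k = 0 := fun j k hk => Function.extend_apply' _ _ _ hk
  have hΦ0 : ∀ k ∉ Set.range e, Φ k = 0 := fun k hk => Function.extend_apply' _ _ _ hk
  have hX : ∀ j, Summable fun k => ‖X j k‖ ^ r := fun j =>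
    (he.summable_iff fun k hk => by simp [hX0 j k hk, hr]).1 <| by
      simpa only [Function.comp_def, hXe] using hx j
  have hΦ : WeaklySummable q Φ := ⟨C, fun y hy s => by
    rw [← Finset.sum_preimage e s he.injOn _ fun k _ hk => by simp [hΦ0 k hk, hq]]
    simpa only [hΦe] using hφ y hy _⟩
  simpa [Function.comp_def, hXe, hΦe] using (H X hX Φ hΦ).comp_injective he

/-- The blocks, concatenated along the sigma type, form one admissible pair of families. -/
lemma bddAbove_blocks_of_cohenSumming {α : Type*} {κ : α → Type*} [∀ k, Fintype (κ k)]
    (H : CohenSumming (Σ k, κ k) T r q) {w : α → ℝ} (hw : Summable w)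
    (x : ∀ k j, κ k → E j) (φ : ∀ k, κ k → F →L[𝕜] 𝕜) (hx : ∀ k j, ∑ i, ‖x k j i‖ ^ r ≤ w k)
    (hφ : ∀ k, ∀ y ∈ closedBall (0 : F) 1, ∑ i, ‖φ k i y‖ ^ q ≤ w k) :
    BddAbove (Set.range fun k => ∑ i, ‖φ k i (T fun j => x k j i)‖) := by
  have hX : ∀ j, Summable fun σ : Σ k, κ k => ‖x σ.1 j σ.2‖ ^ r := fun j =>
    summable_sigma_of_sum_le (fun _ => by positivity) hw fun k => hx k j
  have hΦ : WeaklySummable q fun σ : Σ k, κ k => φ σ.1 σ.2 := ⟨∑' k, w k, fun y hy s =>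
    ((summable_sigma_of_sum_le (fun _ => by positivity) hw fun k => hφ k y hy).sum_le_tsum s
      fun _ _ => by positivity).trans (tsum_sigma_le_of_sum_le (fun _ => by positivity) hw
        fun k => hφ k y hy)⟩
  have hS := H (fun j σ => x σ.1 j σ.2) hX (fun σ => φ σ.1 σ.2) hΦ
  refine ⟨∑' σ : Σ k, κ k, ‖φ σ.1 σ.2 (T fun j => x σ.1 j σ.2)‖, ?_⟩
  rintro _ ⟨k, rfl⟩
  have hk := hS.sum_le_tsum (Finset.univ.map (Function.Embedding.sigmaMk k))
    fun _ _ => norm_nonneg _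
  rw [Finset.sum_map] at hk
  exact hk

variable [Fintype ι]

lemma CohenInequality.le_of_fintype {C : ℝ} (h : CohenInequality T r q C) {κ : Type*}
    [Fintype κ] (x : ∀ j, κ → E j) (φ : κ → F →L[𝕜] 𝕜) :
    ∑ i, ‖φ i (T fun j => x j i)‖ ≤ C * (∏ j, (∑ i, ‖x j i‖ ^ r) ^ (1 / r)) * weakNorm q φ := by
  let e := (Fintype.equivFin κ).symm
  have := h _ (fun j => x j ∘ e) (φ ∘ e)
  simp only [Function.comp_apply, weakNorm_comp_equiv] at this
  simpa only [e.sum_comp (fun i => ‖φ i (T fun j => x j i)‖),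
    fun j => e.sum_comp (fun i => ‖x j i‖ ^ r)] using this

lemma CohenInequality.cohenSumming {C : ℝ} (h : CohenInequality T r q C) (hC : 0 ≤ C)
    (hr : 0 ≤ r) (hq : 0 ≤ q) (κ : Type*) : CohenSumming κ T r q := by
  rintro x hx φ ⟨C₀, hφ⟩
  refine summable_of_sum_le (c := C * (∏ j, (∑' i, ‖x j i‖ ^ r) ^ (1 / r)) * C₀ ^ (1 / q))
    (fun _ => norm_nonneg _) fun s => ?_
  have hx_le : ∀ j, ∑ i : s, ‖x j i‖ ^ r ≤ ∑' i, ‖x j i‖ ^ r := fun j => by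
    rw [Finset.sum_coe_sort s fun i => ‖x j i‖ ^ r]
    exact (hx j).sum_le_tsum s fun _ _ => by positivity
  have hφ_le : weakNorm q (fun i : s => φ i) ≤ C₀ ^ (1 / q) :=
    weakNorm_le_rpow hq _ fun y hy => by
      rw [Finset.sum_coe_sort s fun i => ‖φ i y‖ ^ q]
      exact hφ y hy s
  calc ∑ i ∈ s, ‖φ i (T fun j => x j i)‖ = ∑ i : s, ‖φ i (T fun j => x j i)‖ :=
        (Finset.sum_coe_sort s _).symm
    _ ≤ C * (∏ j, (∑ i : s, ‖x j i‖ ^ r) ^ (1 / r)) * weakNorm q (fun i : s => φ i) :=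
        h.le_of_fintype _ _
    _ ≤ C * (∏ j, (∑' i, ‖x j i‖ ^ r) ^ (1 / r)) * C₀ ^ (1 / q) := by
        gcongr with j
        · exact weakNorm_nonneg hq _
        · exact hx_le j

lemma sum_norm_smul_apply_smul {κ : Type*} [Fintype κ] (a : ι → 𝕜) (b : 𝕜)
    (x : ∀ j, κ → E j) (φ : κ → F →L[𝕜] 𝕜) :
    ∑ i, ‖(b • φ i) (T fun j => a j • x j i)‖
      = (∏ j, ‖a j‖) * ‖b‖ * ∑ i, ‖φ i (T fun j => x j i)‖ := by
  simp only [T.map_smul_univ, smul_apply, map_smul, norm_smul, norm_prod, Finset.mul_sum]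
  ring_nf

/-- The condition `card ι / r + 1 / q = 1` makes the rescaling factors of the right-hand side
multiply to exactly `t`. -/
lemma exists_rescaled_of_lt {κ : Type*} [Fintype κ] {x : ∀ j, κ → E j} {φ : κ → F →L[𝕜] 𝕜}
    {C : ℝ} (hC : 0 ≤ C) (hr : 0 < r) (hq : 0 < q) (hrq : Fintype.card ι / r + 1 / q = 1)
    (hlt : C * (∏ j, (∑ i, ‖x j i‖ ^ r) ^ (1 / r)) * weakNorm q φ
      < ∑ i, ‖φ i (T fun j => x j i)‖) {t : ℝ} (ht : 0 < t) :
    ∃ (x' : ∀ j, κ → E j) (φ' : κ → F →L[𝕜] 𝕜), (∀ j, ∑ i, ‖x' j i‖ ^ r = t) ∧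
      (∀ y ∈ closedBall (0 : F) 1, ∑ i, ‖φ' i y‖ ^ q ≤ t) ∧
      C * t < ∑ i, ‖φ' i (T fun j => x' j i)‖ := by
  set S := ∑ i, ‖φ i (T fun j => x j i)‖
  set A := fun j => ∑ i, ‖x j i‖ ^ r
  set W := weakNorm q φ
  obtain ⟨i₀, -, hi₀⟩ : ∃ i ∈ Finset.univ, ‖φ i (T fun j => x j i)‖ ≠ 0 :=
    Finset.exists_ne_zero_of_sum_ne_zero
      ((mul_nonneg (by positivity) (weakNorm_nonneg hq.le φ)).trans_lt hlt).ne'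
  have hA : ∀ j, 0 < A j := fun j =>
    Finset.sum_pos' (fun _ _ => by positivity) ⟨i₀, Finset.mem_univ _, Real.rpow_pos_of_pos
      (norm_pos_iff.2 fun h => hi₀ (by rw [T.map_coord_zero j h, map_zero, norm_zero])) _⟩
  have hW : 0 < W := (norm_pos_iff.2 fun h => hi₀ (by simp [h])).trans_le
    (norm_le_weakNorm hq φ i₀)
  set a : ι → ℝ := fun j => (t / A j) ^ (1 / r) with ha_def
  set b : ℝ := t ^ (1 / q) / W with hb_def
  have ha : ∀ j, 0 < a j := fun j => by have := hA j; positivity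
  have ha_rpow : ∀ j, a j ^ r * A j = t := fun j => by
    rw [ha_def, one_div, Real.rpow_inv_rpow (div_pos ht (hA j)).le hr.ne',
      div_mul_cancel₀ _ (hA j).ne']
  have hb : 0 < b := by positivity
  refine ⟨fun j i => (a j : 𝕜) • x j i, fun i => (b : 𝕜) • φ i, fun j => ?_, fun y hy => ?_, ?_⟩
  · rw [sum_norm_smul_rpow, RCLike.norm_ofReal, abs_of_pos (ha j), ha_rpow]
  · have hφ' : weakNorm q (fun i => (b : 𝕜) • φ i) = t ^ (1 / q) := by
      rw [weakNorm_smul hq.ne', RCLike.norm_ofReal, abs_of_pos hb, hb_def,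
        div_mul_cancel₀ _ hW.ne']
    calc ∑ i, ‖((b : 𝕜) • φ i) y‖ ^ q ≤ (t ^ (1 / q)) ^ q :=
          hφ' ▸ sum_rpow_le_weakNorm_rpow hq _ hy
      _ = t := by rw [one_div, Real.rpow_inv_rpow ht.le hq.ne']
  · have hscale : (∏ j, a j) * b * ((∏ j, A j ^ (1 / r)) * W) = t := by
      have hprod : ∀ j, a j * A j ^ (1 / r) = t ^ (1 / r) := fun j => by
        rw [ha_def, ← Real.mul_rpow (div_pos ht (hA j)).le (hA j).le,
          div_mul_cancel₀ _ (hA j).ne']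
      calc (∏ j, a j) * b * ((∏ j, A j ^ (1 / r)) * W)
          = (∏ j, a j * A j ^ (1 / r)) * (b * W) := by rw [Finset.prod_mul_distrib]; ring
        _ = t ^ (Fintype.card ι / r) * t ^ (1 / q) := by
          rw [Finset.prod_congr rfl fun j _ => hprod j, Finset.prod_const, Finset.card_univ,
            ← Real.rpow_mul_natCast ht.le, hb_def, div_mul_cancel₀ _ hW.ne']
          ring_nf
        _ = t := by rw [← Real.rpow_add ht, hrq, Real.rpow_one]
    rw [sum_norm_smul_apply_smul]
    simp only [RCLike.norm_ofReal, abs_of_pos (ha _), abs_of_pos hb]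
    calc C * t = (∏ j, a j) * b * (C * (∏ j, A j ^ (1 / r)) * W) := by rw [← hscale]; ring
      _ < (∏ j, a j) * b * S := by gcongr; exact mul_pos (Finset.prod_pos fun j _ => ha j) hb

lemma exists_cohenInequality_of_cohenSumming (H : CohenSumming ℕ T r q) (hr : 0 < r)
    (hq : 0 < q) (hrq : Fintype.card ι / r + 1 / q = 1) : ∃ C > 0, CohenInequality T r q C := by
  by_contra! hne
  have hblock : ∀ k : ℕ, ∃ (m : ℕ) (x : ∀ j, Fin m → E j) (φ : Fin m → F →L[𝕜] 𝕜),
      (∀ j, ∑ i, ‖x j i‖ ^ r ≤ (1 / 2) ^ k) ∧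
      (∀ y ∈ closedBall (0 : F) 1, ∑ i, ‖φ i y‖ ^ q ≤ (1 / 2) ^ k) ∧
      (2 : ℝ) ^ k < ∑ i, ‖φ i (T fun j => x j i)‖ := fun k => by
    obtain ⟨m, x, φ, hlt⟩ : ∃ (m : ℕ) (x : ∀ j, Fin m → E j) (φ : Fin m → F →L[𝕜] 𝕜),
        4 ^ k * (∏ j, (∑ i, ‖x j i‖ ^ r) ^ (1 / r)) * weakNorm q φ
          < ∑ i, ‖φ i (T fun j => x j i)‖ := by
      simpa only [CohenInequality, not_forall, not_le] using hne (4 ^ k) (by positivity)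
    obtain ⟨x', φ', hx', hφ', hS⟩ := exists_rescaled_of_lt (by positivity) hr hq hrq hlt
      (t := (1 / 2) ^ k) (by positivity)
    refine ⟨m, x', φ', fun j => (hx' j).le, hφ', lt_of_eq_of_lt ?_ hS⟩
    rw [← mul_pow]
    norm_num
  choose m x φ hx hφ hS using hblock
  obtain ⟨e, he⟩ := exists_injective_nat (Σ k, Fin (m k))
  obtain ⟨B, hB⟩ := bddAbove_blocks_of_cohenSumming (H.of_injective hr.ne' hq.ne' he)
    summable_geometric_two x φ hx hφ
  obtain ⟨k, hk⟩ := pow_unbounded_of_one_lt B one_lt_two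
  exact (hk.trans (hS k)).not_ge (hB ⟨k, rfl⟩)

end Summing

theorem stmt3_general {𝕜 : Type*} [RCLike 𝕜] {n : ℕ} (hn : 0 < n)
    {E : Fin n → Type*} [∀ j, NormedAddCommGroup (E j)] [∀ j, NormedSpace 𝕜 (E j)]
    {F : Type*} [NormedAddCommGroup F] [NormedSpace 𝕜 F]
    (p q : ℝ) (hp : 1 < p) (hq : 1 / p + 1 / q = 1)
    (T : ContinuousMultilinearMap 𝕜 E F) :
    (∀ x : ∀ j, ℕ → E j, (∀ j, Summable (fun i => ‖x j i‖ ^ ((n : ℝ) * p))) →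
      ∀ φ : ℕ → F →L[𝕜] 𝕜,
        (∃ C : ℝ, ∀ y ∈ Metric.closedBall (0 : F) 1, ∀ s : Finset ℕ,
            ∑ i ∈ s, ‖φ i y‖ ^ q ≤ C) →
        Summable (fun i => ‖φ i (T (fun j => x j i))‖))
    ↔ (∃ C > 0, ∀ (m : ℕ) (x : ∀ j, Fin m → E j) (φ : Fin m → F →L[𝕜] 𝕜),
        ∑ i, ‖φ i (T (fun j => x j i))‖ ≤
          C * (∏ j, (∑ i, ‖x j i‖ ^ ((n : ℝ) * p)) ^ (1 / ((n : ℝ) * p)))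
            * weakNorm q φ) := by
  have hq0 : 0 < q := by
    have : 1 / p < 1 := (div_lt_one (by linarith)).2 hp
    exact one_div_pos.1 (by linarith)
  have hr : 0 < (n : ℝ) * p := by positivity
  have hrq : (Fintype.card (Fin n) : ℝ) / (n * p) + 1 / q = 1 := by
    rw [Fintype.card_fin, div_mul_eq_div_div, div_self (by positivity), hq]
  exact ⟨fun H => exists_cohenInequality_of_cohenSumming H hr hq0 hrq,
    fun ⟨C, hC, h⟩ => CohenInequality.cohenSumming h hC.le hr.le hq0.le ℕ⟩

/-- A bounded `n`-linear operator `T : E₁ × ⋯ × Eₙ → F` maps `n`-tuples of absolutely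
`np`-summable sequences to Cohen strongly `p`-summing sequences iff the Cohen summing
inequality (with the product of `np`-norms) holds. -/
theorem stmt3 {𝕜 : Type*} [RCLike 𝕜] {n : ℕ} (hn : 0 < n)
    {E : Fin n → Type*} [∀ j, NormedAddCommGroup (E j)] [∀ j, NormedSpace 𝕜 (E j)]
    [∀ j, CompleteSpace (E j)]
    {F : Type*} [NormedAddCommGroup F] [NormedSpace 𝕜 F] [CompleteSpace F]
    (p q : ℝ) (hp : 1 < p) (hq : 1 / p + 1 / q = 1)
    (T : ContinuousMultilinearMap 𝕜 E F) :
    (∀ x : ∀ j, ℕ → E j, (∀ j, Summable (fun i => ‖x j i‖ ^ ((n : ℝ) * p))) →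
      ∀ φ : ℕ → F →L[𝕜] 𝕜,
        (∃ C : ℝ, ∀ y ∈ Metric.closedBall (0 : F) 1, ∀ s : Finset ℕ,
            ∑ i ∈ s, ‖φ i y‖ ^ q ≤ C) →
        Summable (fun i => ‖φ i (T (fun j => x j i))‖))
    ↔ (∃ C > 0, ∀ (m : ℕ) (x : ∀ j, Fin m → E j) (φ : Fin m → F →L[𝕜] 𝕜),
        ∑ i, ‖φ i (T (fun j => x j i))‖ ≤
          C * (∏ j, (∑ i, ‖x j i‖ ^ ((n : ℝ) * p)) ^ (1 / ((n : ℝ) * p)))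
            * weakNorm q φ) :=
  stmt3_general hn p q hp hq T
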